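/- The two integral representations of Sym(3) on Z^2 given by w ↦ [[0,1],[-1,-1]], d ↦ [[1,1],[0,-1]] and by w ↦ [[0,1],[-1,-1]], d ↦ [[1,0],[-1,-1]] are not equivalent over Z: there is no matrix P ∈ GL(2,Z) conjugating one pair of matrices to the other. -/
import Mathlib


/-- The two integral representations of `Sym(3)` on `Z²` given by
`w ↦ [[0,1],[-1,-1]], d ↦ [[1,1],[0,-1]]` and `w ↦ [[0,1],[-1,-1]], d ↦ [[1,0],[-1,-1]]`
are not `Z`-equivalent: no matrix in `GL(2,Z)` simultaneously conjugates one pair to the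
other. -/
theorem stmt9 :
    ¬ ∃ P : Matrix (Fin 2) (Fin 2) ℤ,
      (P.det = 1 ∨ P.det = -1) ∧
      P * !![0, 1; -1, -1] = !![0, 1; -1, -1] * P ∧
      P * !![1, 1; 0, -1] = !![1, 0; -1, -1] * P := by
  rintro ⟨P, hdet, h1, h2⟩
  have e1 := congrFun (congrFun h1 0) 0
  have e2 := congrFun (congrFun h1 0) 1
  have e3 := congrFun (congrFun h1 1) 0
  have f1 := congrFun (congrFun h2 0) 0
  have f2 := congrFun (congrFun h2 0) 1
  have f3 := congrFun (congrFun h2 1) 0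
  simp [Matrix.mul_apply, Fin.sum_univ_two] at e1 e2 e3 f1 f2 f3
  rw [Matrix.det_fin_two] at hdet
  set a := P 0 0; set b := P 0 1; set c := P 1 0; set d := P 1 1
  have hc : c = -b := by linarith
  have hd : d = a - b := by linarith
  have hab : a = 2 * b := by linarith
  have h3 : a * d - b * c = 3 * b ^ 2 := by rw [hc, hd, hab]; ring
  rcases eq_or_ne b 0 with hb | hb
  · have h4 : a * d - b * c = 0 := by rw [h3, hb]; ring
    rcases hdet with h | h <;> linarith
  · have hb1 : 1 ≤ |b| := Int.one_le_abs hb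
    have hb2 : 1 ≤ b ^ 2 := by nlinarith [sq_abs b]
    rcases hdet with h | h <;> nlinarith
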